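/- In Max ℂ² (where ℂ² is the C*-algebra ℂ × ℂ with coordinatewise operations), the diagonal subspace D = {(x, x) : x ∈ ℂ} is a maximal proper linear subspace but is not a prime element: for a = ℂ·(1,0) and b = ℂ·(0,1) one has a∘⊤∘b = {0} ≤ D while a ≰ D and b ≰ D. Consequently D is not a meet of prime elements (D ≠ ⨅{p prime : D ≤ p}), and hence Max ℂ² is not spatial with respect to irreducible representations. -/

import Mathlib

/-!
The diagonal `D` is the kernel of `(x, y) ↦ x - y`, hence a coatom. Since `(1,0) * (0,1) = 0` in
the commutative algebra `ℂ²`, the product `ℂ(1,0) ∘ ⊤ ∘ ℂ(0,1)` vanishes, so every prime `p ≥ D`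
contains `(1,0)` or `(0,1)`; neither lies in `D`, so `p > D` and therefore `p = ⊤`. Thus the only
prime above `D` is `⊤`, and in particular `D` is not prime.
-/

/-- The quantale multiplication of `Max ℂ²`: `M∘N` is the closure of the linear span of the
products (all subspaces of `ℂ²` are closed). -/
noncomputable def qmul (M N : Submodule ℂ (ℂ × ℂ)) : Submodule ℂ (ℂ × ℂ) :=
  (M * N).topologicalClosure

/-- A prime element of the quantale `Max ℂ²`: `M∘⊤∘N ≤ P` implies `M ≤ P` or `N ≤ P`. -/
def IsPrimeEl (P : Submodule ℂ (ℂ × ℂ)) : Prop :=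
  ∀ M N : Submodule ℂ (ℂ × ℂ), IsClosed (M : Set (ℂ × ℂ)) → IsClosed (N : Set (ℂ × ℂ)) →
    qmul (qmul M ⊤) N ≤ P → M ≤ P ∨ N ≤ P

/-- The diagonal subspace `{(x, x) : x ∈ ℂ}` of `ℂ²`. -/
noncomputable def diagSub : Submodule ℂ (ℂ × ℂ) where
  carrier := {z | z.1 = z.2}
  add_mem' := by
    intro a b ha hb
    simp only [Set.mem_setOf_eq, Prod.fst_add, Prod.snd_add] at *
    rw [ha, hb]
  zero_mem' := rfl
  smul_mem' := by
    intro c z hz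
    simp only [Set.mem_setOf_eq, Prod.smul_fst, Prod.smul_snd] at *
    rw [hz]

lemma Submodule.span_singleton_mul_top_mul_span_singleton_eq_bot {R A : Type*} [CommSemiring R]
    [CommSemiring A] [Algebra R A] {a b : A} (hab : a * b = 0) :
    span R {a} * ⊤ * span R {b} = ⊥ := by
  rw [mul_right_comm, span_mul_span, Set.singleton_mul_singleton, hab, span_zero_singleton,
    bot_mul]

lemma isClosed_submodule (M : Submodule ℂ (ℂ × ℂ)) : IsClosed (M : Set (ℂ × ℂ)) :=
  M.closed_of_finiteDimensional

lemma qmul_eq_mul (M N : Submodule ℂ (ℂ × ℂ)) : qmul M N = M * N :=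
  (isClosed_submodule _).submodule_topologicalClosure_eq

lemma mem_diagSub {z : ℂ × ℂ} : z ∈ diagSub ↔ z.1 = z.2 := Iff.rfl

lemma diagSub_eq_ker : diagSub = LinearMap.ker (LinearMap.fst ℂ ℂ ℂ - LinearMap.snd ℂ ℂ ℂ) := by
  ext z
  simp [mem_diagSub, sub_eq_zero]

lemma isCoatom_diagSub : IsCoatom diagSub :=
  diagSub_eq_ker ▸ LinearMap.isCoatom_ker_of_surjective fun c => ⟨(c, 0), by simp⟩

lemma qmul_span_top_span_eq_bot :
    qmul (qmul (Submodule.span ℂ {((1 : ℂ), (0 : ℂ))}) ⊤)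
      (Submodule.span ℂ {((0 : ℂ), (1 : ℂ))}) = ⊥ := by
  rw [qmul_eq_mul, qmul_eq_mul]
  exact Submodule.span_singleton_mul_top_mul_span_singleton_eq_bot (by simp)

lemma span_one_zero_not_le_diagSub : ¬ Submodule.span ℂ {((1 : ℂ), (0 : ℂ))} ≤ diagSub := by
  simp [Submodule.span_singleton_le_iff_mem, mem_diagSub]

lemma span_zero_one_not_le_diagSub : ¬ Submodule.span ℂ {((0 : ℂ), (1 : ℂ))} ≤ diagSub := by
  simp [Submodule.span_singleton_le_iff_mem, mem_diagSub]

lemma eq_top_of_isPrimeEl_of_diagSub_le {p : Submodule ℂ (ℂ × ℂ)} (hp : IsPrimeEl p)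
    (hDp : diagSub ≤ p) : p = ⊤ := by
  rcases isCoatom_diagSub.le_iff.mp hDp with hp_top | rfl
  · exact hp_top
  · rcases hp _ _ (isClosed_submodule _) (isClosed_submodule _)
      (qmul_span_top_span_eq_bot ▸ bot_le) with h | h
    · exact absurd h span_one_zero_not_le_diagSub
    · exact absurd h span_zero_one_not_le_diagSub

lemma sInf_isPrimeEl_diagSub_le_eq_top :
    sInf {p : Submodule ℂ (ℂ × ℂ) |
      IsClosed (p : Set (ℂ × ℂ)) ∧ IsPrimeEl p ∧ diagSub ≤ p} = ⊤ :=
  sInf_eq_top.mpr fun _ ⟨_, hp, hDp⟩ => eq_top_of_isPrimeEl_of_diagSub_le hp hDp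

/-- In `Max ℂ²`, the diagonal `D` is a maximal proper linear subspace but not a
prime element (witnessed by `a = ℂ·(1,0)`, `b = ℂ·(0,1)` with `a∘⊤∘b = 0 ≤ D`, `a ≰ D`,
`b ≰ D`); consequently `D` is not a meet of prime elements and `Max ℂ²` is not spatial with
respect to irreducible representations. -/
theorem maxC2_not_spatial :
    (diagSub ≠ ⊤ ∧ ∀ M : Submodule ℂ (ℂ × ℂ), diagSub < M → M = ⊤) ∧
    (qmul (qmul (Submodule.span ℂ {((1 : ℂ), (0 : ℂ))}) ⊤)
        (Submodule.span ℂ {((0 : ℂ), (1 : ℂ))}) = ⊥ ∧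
      ¬ Submodule.span ℂ {((1 : ℂ), (0 : ℂ))} ≤ diagSub ∧
      ¬ Submodule.span ℂ {((0 : ℂ), (1 : ℂ))} ≤ diagSub) ∧
    ¬ IsPrimeEl diagSub ∧
    diagSub ≠ sInf {p : Submodule ℂ (ℂ × ℂ) |
        IsClosed (p : Set (ℂ × ℂ)) ∧ IsPrimeEl p ∧ diagSub ≤ p} ∧
    ¬ (∀ m : Submodule ℂ (ℂ × ℂ), IsClosed (m : Set (ℂ × ℂ)) →
        m = sInf {p : Submodule ℂ (ℂ × ℂ) |
          IsClosed (p : Set (ℂ × ℂ)) ∧ IsPrimeEl p ∧ m ≤ p}) := by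
  have hD_ne_sInf : diagSub ≠ sInf {p : Submodule ℂ (ℂ × ℂ) |
      IsClosed (p : Set (ℂ × ℂ)) ∧ IsPrimeEl p ∧ diagSub ≤ p} :=
    sInf_isPrimeEl_diagSub_le_eq_top ▸ isCoatom_diagSub.ne_top
  exact ⟨⟨isCoatom_diagSub.ne_top, fun _ => isCoatom_diagSub.lt_iff.mp⟩,
    ⟨qmul_span_top_span_eq_bot, span_one_zero_not_le_diagSub, span_zero_one_not_le_diagSub⟩,
    fun hD => isCoatom_diagSub.ne_top (eq_top_of_isPrimeEl_of_diagSub_le hD le_rfl),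
    hD_ne_sInf, fun h => hD_ne_sInf (h _ (isClosed_submodule _))⟩
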